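/- arXiv:2401.10142 — 6 statements merged into one kernel-verified Lean document; each statement's English description precedes it below -/
import Mathlib

section
/- For every unit vector ψ ∈ ℂ^d, the revival fidelity satisfies F_R(ψ) = 1 if and only if either ψ is a scalar multiple of ψ_i for some i ∈ ℬ, or ψ lies in the linear span of {ψ_i : i ∈ 𝒜}. (In the paper's terminology: the set of free pure states is 𝒮_F = S_Irr ⊔ L_Rat.) -/
open Matrix Complex

noncomputable section

/-- Time-evolution unitary `U(t) = exp(-i t H)`. -/
def Uevol {d : ℕ} (H : Matrix (Fin d) (Fin d) ℂ) (t : ℝ) : Matrix (Fin d) (Fin d) ℂ :=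
  NormedSpace.exp ((-(Complex.I * (t : ℂ))) • H)

/-- Revival fidelity `F_R(ψ) = |⟨ψ, U(2πT)ψ⟩|`. -/
def FR {d : ℕ} (H : Matrix (Fin d) (Fin d) ℂ) (T : ℕ) (x : Fin d → ℂ) : ℝ :=
  ‖star x ⬝ᵥ (Uevol H (2 * Real.pi * T) *ᵥ x)‖

/-- A free pure state: a unit vector with perfect revival. -/
def IsFreeState {d : ℕ} (H : Matrix (Fin d) (Fin d) ℂ) (T : ℕ) (x : Fin d → ℂ) : Prop :=
  star x ⬝ᵥ x = 1 ∧ FR H T x = 1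

/-- A free unitary: a unitary matrix mapping every free pure state to a free pure state. -/
def IsFreeUnitary {d : ℕ} (H : Matrix (Fin d) (Fin d) ℂ) (T : ℕ)
    (V : Matrix (Fin d) (Fin d) ℂ) : Prop :=
  V ∈ Matrix.unitaryGroup (Fin d) ℂ ∧
    ∀ x : Fin d → ℂ, IsFreeState H T x → IsFreeState H T (V *ᵥ x)

/-!
Expanding `x = ∑ⱼ cⱼ ψⱼ`, the revival amplitude `⟨x, U(2πT) x⟩ = ∑ⱼ |cⱼ|² zⱼ` with
`zⱼ = exp(-2πiT Eⱼ)` is a convex combination of unimodular phases, so by the equality case of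
Jensen's inequality for the strictly convex `‖·‖²` it has modulus one iff `z` is constant on the
support of `c`. The phases equal `1` on `𝒜`, differ from `1` on `ℬ` and are pairwise distinct on
`ℬ`, so this happens iff the support lies in `𝒜` or is a single index of `ℬ`.
-/

theorem strictConvexOn_norm_sq {E : Type*} [NormedAddCommGroup E] [InnerProductSpace ℝ E] :
    StrictConvexOn ℝ Set.univ (fun x : E => ‖x‖ ^ 2) := by
  refine (strongConvexOn_iff_convex (m := 2).2 ?_).strictConvexOn two_pos
  simpa using convexOn_const (0 : ℝ) convex_univ

theorem norm_sum_smul_eq_one_iff {ι E : Type*} [NormedAddCommGroup E] [InnerProductSpace ℝ E]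
    {t : Finset ι} {w : ι → ℝ} {p : ι → E} (h₀ : ∀ i ∈ t, 0 ≤ w i) (h₁ : ∑ i ∈ t, w i = 1)
    (hp : ∀ i ∈ t, ‖p i‖ = 1) :
    ‖∑ i ∈ t, w i • p i‖ = 1 ↔ ∀ j ∈ t, w j ≠ 0 → ∀ k ∈ t, w k ≠ 0 → p j = p k := by
  have hjensen :=
    strictConvexOn_norm_sq.map_sum_eq_iff_of_nonneg h₀ h₁ fun i _ => Set.mem_univ (p i)
  have hrhs : ∑ i ∈ t, w i • ‖p i‖ ^ 2 = 1 := by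
    rw [← h₁]
    exact Finset.sum_congr rfl fun i hi => by simp [hp i hi]
  rwa [hrhs, pow_eq_one_iff_of_nonneg (norm_nonneg _) two_ne_zero] at hjensen

theorem eq_on_support_iff_of_injOn {ι α M : Type*} [Zero M] {A B : Set ι} {z : ι → α} {a : α}
    (hcover : ∀ i, i ∈ A ∨ i ∈ B) (hA : ∀ i ∈ A, z i = a) (hB : ∀ i ∈ B, z i ≠ a)
    (hinj : B.InjOn z) (c : ι → M) :
    (∀ j, c j ≠ 0 → ∀ k, c k ≠ 0 → z j = z k) ↔
      (∃ i ∈ B, ∀ j ≠ i, c j = 0) ∨ ∀ j ∉ A, c j = 0 := by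
  constructor
  · intro h
    by_cases hsupp : ∀ j ∉ A, c j = 0
    · exact .inr hsupp
    push Not at hsupp
    obtain ⟨i, hiA, hci⟩ := hsupp
    have hiB := (hcover i).resolve_left hiA
    refine .inl ⟨i, hiB, fun j hji => by_contra fun hcj => hji ?_⟩
    have hzji := h j hcj i hci
    rcases hcover j with hjA | hjB
    · exact absurd (hzji ▸ hA j hjA) (hB i hiB)
    · exact hinj hjB hiB hzji
  · rintro (⟨i, -, hi⟩ | hsupp) j hj k hk
    · obtain rfl : j = i := by_contra fun h => hj (hi j h)
      obtain rfl : k = j := by_contra fun h => hk (hi k h)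
      rfl
    · rw [hA j (by_contra fun h => hj (hsupp j h)), hA k (by_contra fun h => hk (hsupp k h))]

namespace Matrix

section Orthonormal

variable {n R : Type*} [Fintype n] [DecidableEq n] [CommRing R] [StarRing R] {ψ : n → n → R}

theorem sum_dotProduct_smul_of_orthonormal
    (horth : ∀ i j, star (ψ i) ⬝ᵥ ψ j = if i = j then 1 else 0) (x : n → R) :
    ∑ j, (star (ψ j) ⬝ᵥ x) • ψ j = x := by
  set Q : Matrix n n R := (of ψ)ᵀ
  have hQ : Qᴴ * Q = 1 := by
    ext i j
    simpa [Q, mul_apply, one_apply, dotProduct] using horth i j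
  calc ∑ j, (star (ψ j) ⬝ᵥ x) • ψ j = Q *ᵥ (Qᴴ *ᵥ x) := by
        ext i
        simp [Q, mulVec, dotProduct, Finset.sum_apply, mul_comm]
    _ = x := by rw [mulVec_mulVec, mul_eq_one_comm.mp hQ, one_mulVec]

theorem mem_span_image_iff_of_orthonormal
    (horth : ∀ i j, star (ψ i) ⬝ᵥ ψ j = if i = j then 1 else 0) (s : Set n) (x : n → R) :
    x ∈ Submodule.span R (ψ '' s) ↔ ∀ j ∉ s, star (ψ j) ⬝ᵥ x = 0 := by
  constructor
  · rintro hx j hj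
    obtain ⟨t, hts, c, rfl⟩ := (Submodule.mem_span_image_iff_exists_fun R).mp hx
    rw [dotProduct_sum]
    refine Finset.sum_eq_zero fun i _ => ?_
    rw [dotProduct_smul, horth, if_neg (ne_of_mem_of_not_mem (hts i.2) hj).symm, smul_zero]
  · intro hx
    rw [← sum_dotProduct_smul_of_orthonormal horth x]
    refine Submodule.sum_mem _ fun j _ => ?_
    by_cases hj : j ∈ s
    · exact Submodule.smul_mem _ _ (Submodule.subset_span ⟨j, hj, rfl⟩)
    · simp [hx j hj]

theorem exists_eq_smul_iff_of_orthonormal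
    (horth : ∀ i j, star (ψ i) ⬝ᵥ ψ j = if i = j then 1 else 0) (i : n) (x : n → R) :
    (∃ c : R, x = c • ψ i) ↔ ∀ j ≠ i, star (ψ j) ⬝ᵥ x = 0 := by
  simpa [Submodule.mem_span_singleton, eq_comm] using mem_span_image_iff_of_orthonormal horth {i} x

end Orthonormal

theorem star_dotProduct_mulVec_of_orthonormal {n 𝕜 : Type*} [Fintype n] [DecidableEq n]
    [RCLike 𝕜] {ψ : n → n → 𝕜} (horth : ∀ i j, star (ψ i) ⬝ᵥ ψ j = if i = j then 1 else 0)
    {M : Matrix n n 𝕜} {z : n → 𝕜} (hM : ∀ j, M *ᵥ ψ j = z j • ψ j) (x : n → 𝕜) :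
    star x ⬝ᵥ (M *ᵥ x) = ∑ j, (‖star (ψ j) ⬝ᵥ x‖ ^ 2 : ℝ) • z j := by
  have hMx : M *ᵥ x = ∑ j, ((star (ψ j) ⬝ᵥ x) * z j) • ψ j := by
    conv_lhs => rw [← sum_dotProduct_smul_of_orthonormal horth x]
    simp only [mulVec_sum, mulVec_smul, hM, smul_smul]
  rw [hMx, dotProduct_sum]
  refine Finset.sum_congr rfl fun j _ => ?_
  rw [dotProduct_smul, star_dotProduct (v := x), smul_eq_mul, RCLike.real_smul_eq_coe_mul,
    RCLike.star_def, mul_right_comm, RCLike.mul_conj, RCLike.ofReal_pow]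

theorem norm_star_dotProduct_mulVec_eq_one_iff {n : Type*} [Fintype n] [DecidableEq n]
    {ψ : n → n → ℂ} (horth : ∀ i j, star (ψ i) ⬝ᵥ ψ j = if i = j then 1 else 0)
    {M : Matrix n n ℂ} {z : n → ℂ} (hM : ∀ j, M *ᵥ ψ j = z j • ψ j) (hz : ∀ j, ‖z j‖ = 1)
    {x : n → ℂ} (hx : star x ⬝ᵥ x = 1) :
    ‖star x ⬝ᵥ (M *ᵥ x)‖ = 1 ↔
      ∀ j, star (ψ j) ⬝ᵥ x ≠ 0 → ∀ k, star (ψ k) ⬝ᵥ x ≠ 0 → z j = z k := by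
  have hparseval : ∑ j, ‖star (ψ j) ⬝ᵥ x‖ ^ 2 = 1 := by
    have := star_dotProduct_mulVec_of_orthonormal horth (M := 1) (z := 1) (by simp) x
    rw [one_mulVec, hx] at this
    exact_mod_cast (by simpa using this.symm : (∑ j, ‖star (ψ j) ⬝ᵥ x‖ ^ 2 : ℂ) = 1)
  rw [star_dotProduct_mulVec_of_orthonormal horth hM,
    norm_sum_smul_eq_one_iff (fun _ _ => by positivity) hparseval fun j _ => hz j]
  simp

theorem exp_mulVec_of_mulVec_eq_smul {n : Type*} [Fintype n] [DecidableEq n]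
    {M : Matrix n n ℂ} {v : n → ℂ} {μ : ℂ} (h : M *ᵥ v = μ • v) :
    NormedSpace.exp M *ᵥ v = Complex.exp μ • v := by
  -- any Banach-algebra norm inducing the product topology lets the exponential series converge
  let := Matrix.linftyOpNormedRing (n := n) (α := ℂ)
  let := Matrix.linftyOpNormedAlgebra (n := n) (α := ℂ) (R := ℂ)
  have hpow : ∀ k : ℕ, (M ^ k) *ᵥ v = μ ^ k • v := by
    intro k
    induction k with
    | zero => simp
    | succ k ih => rw [pow_succ', ← mulVec_mulVec, ih, mulVec_smul, h, smul_smul, pow_succ]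
  have hM := (NormedSpace.exp_series_hasSum_exp' (𝕂 := ℂ) M).map (mulVec.addMonoidHomLeft v)
    (continuous_id.matrix_mulVec continuous_const)
  have hμ := (NormedSpace.exp_series_hasSum_exp' (𝕂 := ℂ) μ).smul_const v
  rw [Complex.exp_eq_exp_ℂ]
  refine hM.unique ?_
  simpa [mulVec.addMonoidHomLeft, Function.comp_def, smul_mulVec, hpow, smul_smul] using hμ

end Matrix

namespace Complex

theorem exp_neg_I_mul_eq_one_iff (s r : ℝ) :
    exp (-(I * ↑(2 * Real.pi * s)) * r) = 1 ↔ ∃ m : ℤ, r * s = m := by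
  rw [exp_eq_one_iff, ← (Equiv.neg ℤ).exists_congr_right]
  refine exists_congr fun m => ?_
  rw [Equiv.neg_apply, ← sub_eq_zero,
    show -(I * ↑(2 * Real.pi * s)) * ↑r - ↑(-m : ℤ) * (2 * Real.pi * I)
      = -(2 * Real.pi * I) * ((r * s - m : ℝ) : ℂ) by push_cast; ring,
    neg_mul, neg_eq_zero, mul_eq_zero, or_iff_right two_pi_I_ne_zero, ofReal_eq_zero,
    sub_eq_zero]

theorem exp_neg_I_mul_eq_exp_neg_I_mul_iff (s r r' : ℝ) :
    exp (-(I * ↑(2 * Real.pi * s)) * r) = exp (-(I * ↑(2 * Real.pi * s)) * r') ↔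
      ∃ m : ℤ, (r - r') * s = m := by
  rw [← exp_neg_I_mul_eq_one_iff, ofReal_sub, mul_sub, exp_sub, div_eq_one_iff_eq (exp_ne_zero _)]

theorem norm_exp_neg_I_mul (t r : ℝ) : ‖exp (-(I * t) * r)‖ = 1 := by
  rw [show -(I * t) * r = ((-(t * r) : ℝ) : ℂ) * I by push_cast; ring, norm_exp_ofReal_mul_I]

end Complex

theorem free_pure_states_characterization_general
    (d : ℕ)
    (H : Matrix (Fin d) (Fin d) ℂ)
    (ψ : Fin d → Fin d → ℂ) (E : Fin d → ℝ)
    (horth : ∀ i j : Fin d, star (ψ i) ⬝ᵥ ψ j = if i = j then 1 else 0)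
    (heig : ∀ i : Fin d, H *ᵥ ψ i = (E i : ℂ) • ψ i)
    (T : ℕ) (hT : 0 < T)
    (A B : Finset (Fin d))
    (hcover : A ∪ B = Finset.univ)
    (hArat : ∀ i ∈ A, ∃ m : ℤ, E i * (T : ℝ) = (m : ℝ))
    (hBirr : ∀ i ∈ B, Irrational (E i))
    (hBdiff : ∀ i ∈ B, ∀ j ∈ B, i ≠ j → Irrational (E i - E j))
    (x : Fin d → ℂ) (hx : star x ⬝ᵥ x = 1) :
    FR H T x = 1 ↔
      ((∃ i ∈ B, ∃ c : ℂ, x = c • ψ i) ∨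
        x ∈ Submodule.span ℂ (ψ '' (A : Set (Fin d)))) := by
  set z : Fin d → ℂ := fun k => exp (-(I * ↑(2 * Real.pi * T)) * E k)
  have hU : ∀ k, Uevol H (2 * Real.pi * T) *ᵥ ψ k = z k • ψ k := fun k =>
    exp_mulVec_of_mulVec_eq_smul (by rw [smul_mulVec (R := ℂ), heig, smul_smul])
  have hzA : ∀ k ∈ A, z k = 1 := fun k hk => (exp_neg_I_mul_eq_one_iff _ _).2 (hArat k hk)
  have hzB : ∀ k ∈ B, z k ≠ 1 := fun k hk hzk =>
    let ⟨m, hm⟩ := (exp_neg_I_mul_eq_one_iff _ _).1 hzk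
    ((hBirr k hk).mul_natCast hT.ne').ne_int m hm
  have hzinj : Set.InjOn z B := fun j hj k hk hzjk => by_contra fun hjk =>
    let ⟨m, hm⟩ := (exp_neg_I_mul_eq_exp_neg_I_mul_iff _ _ _).1 hzjk
    ((hBdiff j hj k hk hjk).mul_natCast hT.ne').ne_int m hm
  have hmem : ∀ k, k ∈ A ∨ k ∈ B := fun k => Finset.mem_union.1 (hcover ▸ Finset.mem_univ k)
  rw [FR, norm_star_dotProduct_mulVec_eq_one_iff horth hU (fun k => norm_exp_neg_I_mul _ _) hx,
    eq_on_support_iff_of_injOn hmem hzA hzB hzinj, mem_span_image_iff_of_orthonormal horth]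
  simp only [exists_eq_smul_iff_of_orthonormal horth, Finset.mem_coe]

theorem free_pure_states_characterization
    (d : ℕ) (hd : 2 ≤ d)
    (H : Matrix (Fin d) (Fin d) ℂ) (hH : H.IsHermitian)
    (ψ : Fin d → Fin d → ℂ) (E : Fin d → ℝ)
    (horth : ∀ i j : Fin d, star (ψ i) ⬝ᵥ ψ j = if i = j then 1 else 0)
    (heig : ∀ i : Fin d, H *ᵥ ψ i = (E i : ℂ) • ψ i)
    (T : ℕ) (hT : 0 < T)
    (A B : Finset (Fin d))
    (hdisj : Disjoint A B) (hcover : A ∪ B = Finset.univ)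
    (hArat : ∀ i ∈ A, ∃ m : ℤ, E i * (T : ℝ) = (m : ℝ))
    (hBirr : ∀ i ∈ B, Irrational (E i))
    (hBdiff : ∀ i ∈ B, ∀ j ∈ B, i ≠ j → Irrational (E i - E j))
    (hAcard : 1 < A.card) (hBcard : 1 < B.card)
    (x : Fin d → ℂ) (hx : star x ⬝ᵥ x = 1) :
    FR H T x = 1 ↔
      ((∃ i ∈ B, ∃ c : ℂ, x = c • ψ i) ∨
        x ∈ Submodule.span ℂ (ψ '' (A : Set (Fin d)))) :=
  free_pure_states_characterization_general d H ψ E horth heig T hT A B hcover hArat hBirr hBdiff x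
    hx
end
end

section
/- The revival destruction capacity is faithful: for every d×d unitary W one has D(W) ≥ 0, and D(W) = 0 if and only if W is a free unitary. -/
open Matrix Complex

noncomputable section

/-- Non-revival monotone `R(ψ) = sup over free unitaries V of (1 - F_R(Vψ))`. -/
def Rmono {d : ℕ} (H : Matrix (Fin d) (Fin d) ℂ) (T : ℕ) (x : Fin d → ℂ) : ℝ :=
  ⨆ V : {V : Matrix (Fin d) (Fin d) ℂ // IsFreeUnitary H T V}, (1 - FR H T (V.1 *ᵥ x))

/-- Revival destruction capacity `D(W) = sup over free states ψ of R(Wψ)`. -/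
def Dcap {d : ℕ} (H : Matrix (Fin d) (Fin d) ℂ) (T : ℕ) (W : Matrix (Fin d) (Fin d) ℂ) : ℝ :=
  ⨆ x : {x : Fin d → ℂ // IsFreeState H T x}, Rmono H T (W *ᵥ x.1)

/-! Taking `V = 1` gives `R(ψ) ≥ 1 - F_R(ψ)`, and `F_R(ψ) ≤ 1` for unit `ψ` by Cauchy–Schwarz, since
`U(2πT)` is unitary; so `R(ψ) ≥ 0`, with `R(ψ) ≤ 0` forcing `F_R(ψ) = 1`. Conversely `R` vanishes on
free states, which free unitaries keep free. Hence `D(W) ≥ 0`, and `D(W) = 0` exactly when `W` maps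
every free state to a free state. -/

section DotProduct

variable {𝕜 ι : Type*} [RCLike 𝕜] [Fintype ι]

theorem Matrix.norm_toLp_eq_one_of_star_dotProduct_self {x : ι → 𝕜}
    (hx : star x ⬝ᵥ x = 1) : ‖WithLp.toLp 2 x‖ = 1 := by
  have h : ((‖WithLp.toLp 2 x‖ ^ 2 : ℝ) : 𝕜) = 1 := by
    rw [RCLike.ofReal_pow, ← inner_self_eq_norm_sq_to_K, EuclideanSpace.inner_toLp_toLp,
      dotProduct_comm, hx]
  exact (pow_eq_one_iff_of_nonneg (norm_nonneg _) two_ne_zero).mp (by exact_mod_cast h)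

theorem Matrix.norm_star_dotProduct_le_one {x y : ι → 𝕜} (hx : star x ⬝ᵥ x = 1)
    (hy : star y ⬝ᵥ y = 1) : ‖star x ⬝ᵥ y‖ ≤ 1 := by
  have := norm_inner_le_norm (𝕜 := 𝕜) (WithLp.toLp 2 x) (WithLp.toLp 2 y)
  rwa [EuclideanSpace.inner_toLp_toLp, dotProduct_comm,
    norm_toLp_eq_one_of_star_dotProduct_self hx, norm_toLp_eq_one_of_star_dotProduct_self hy,
    mul_one] at this

theorem Matrix.star_mulVec_dotProduct_mulVec_of_mem_unitaryGroup {V : Matrix ι ι 𝕜}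
    [DecidableEq ι] (hV : V ∈ unitaryGroup ι 𝕜) (x : ι → 𝕜) :
    star (V *ᵥ x) ⬝ᵥ (V *ᵥ x) = star x ⬝ᵥ x := by
  rw [star_mulVec, ← dotProduct_mulVec, mulVec_mulVec, ← star_eq_conjTranspose,
    mem_unitaryGroup_iff'.mp hV, one_mulVec]

end DotProduct

theorem Uevol_mem_unitaryGroup {d : ℕ} {H : Matrix (Fin d) (Fin d) ℂ} (hH : H.IsHermitian)
    (t : ℝ) : Uevol H t ∈ unitaryGroup (Fin d) ℂ := by
  set X : Matrix (Fin d) (Fin d) ℂ := (-(Complex.I * (t : ℂ))) • H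
  have hX : Xᴴ = -X := by
    rw [conjTranspose_smul, hH.eq, ← neg_smul]
    congr 1
    simp
  rw [mem_unitaryGroup_iff', star_eq_conjTranspose, Uevol, ← exp_conjTranspose, hX,
    ← exp_add_of_commute _ _ (Commute.neg_left (Commute.refl X)), neg_add_cancel,
    NormedSpace.exp_zero]

section Revival

variable {d : ℕ} {H : Matrix (Fin d) (Fin d) ℂ} {T : ℕ}

theorem FR_le_one (hH : H.IsHermitian) {x : Fin d → ℂ} (hx : star x ⬝ᵥ x = 1) :
    FR H T x ≤ 1 :=
  norm_star_dotProduct_le_one hx <| by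
    rw [star_mulVec_dotProduct_mulVec_of_mem_unitaryGroup (Uevol_mem_unitaryGroup hH _), hx]

theorem isFreeUnitary_one : IsFreeUnitary H T 1 :=
  ⟨one_mem _, fun x hx => by rwa [one_mulVec]⟩

theorem Rmono_le_one (x : Fin d → ℂ) : Rmono H T x ≤ 1 :=
  Real.iSup_le (fun _ => sub_le_self _ (norm_nonneg _)) zero_le_one

theorem one_sub_FR_le_Rmono (x : Fin d → ℂ) : 1 - FR H T x ≤ Rmono H T x := by
  have hbdd : BddAbove (Set.range fun V : {V // IsFreeUnitary H T V} => 1 - FR H T (V.1 *ᵥ x)) :=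
    ⟨1, by rintro _ ⟨V, rfl⟩; exact sub_le_self _ (norm_nonneg _)⟩
  have h := le_ciSup hbdd ⟨1, isFreeUnitary_one⟩
  rwa [one_mulVec] at h

theorem Rmono_nonneg (hH : H.IsHermitian) {x : Fin d → ℂ} (hx : star x ⬝ᵥ x = 1) :
    0 ≤ Rmono H T x :=
  (sub_nonneg.mpr (FR_le_one hH hx)).trans (one_sub_FR_le_Rmono x)

theorem Rmono_eq_zero_of_isFreeState {x : Fin d → ℂ} (hx : IsFreeState H T x) :
    Rmono H T x = 0 := by
  have hterm (V : {V // IsFreeUnitary H T V}) : 1 - FR H T (V.1 *ᵥ x) = 0 := by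
    rw [(V.2.2 x hx).2, sub_self]
  rw [Rmono, iSup_congr hterm, Real.iSup_const_zero]

theorem isFreeState_of_Rmono_nonpos (hH : H.IsHermitian) {x : Fin d → ℂ}
    (hx : star x ⬝ᵥ x = 1) (h : Rmono H T x ≤ 0) : IsFreeState H T x :=
  ⟨hx, le_antisymm (FR_le_one hH hx) (by linarith [one_sub_FR_le_Rmono (H := H) (T := T) x])⟩

variable {W : Matrix (Fin d) (Fin d) ℂ}

theorem Rmono_le_Dcap {x : Fin d → ℂ} (hx : IsFreeState H T x) :
    Rmono H T (W *ᵥ x) ≤ Dcap H T W := by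
  have hbdd : BddAbove (Set.range fun y : {y // IsFreeState H T y} => Rmono H T (W *ᵥ y.1)) :=
    ⟨1, by rintro _ ⟨y, rfl⟩; exact Rmono_le_one _⟩
  exact le_ciSup hbdd ⟨x, hx⟩

theorem Dcap_nonneg (hH : H.IsHermitian) (hW : W ∈ unitaryGroup (Fin d) ℂ) :
    0 ≤ Dcap H T W :=
  Real.iSup_nonneg fun x => Rmono_nonneg hH <| by
    rw [star_mulVec_dotProduct_mulVec_of_mem_unitaryGroup hW, x.2.1]

theorem Dcap_eq_zero_iff (hH : H.IsHermitian) (hW : W ∈ unitaryGroup (Fin d) ℂ) :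
    Dcap H T W = 0 ↔ IsFreeUnitary H T W := by
  constructor
  · intro hD
    refine ⟨hW, fun x hx => isFreeState_of_Rmono_nonpos hH ?_ (hD ▸ Rmono_le_Dcap hx)⟩
    rw [star_mulVec_dotProduct_mulVec_of_mem_unitaryGroup hW, hx.1]
  · intro hWfree
    rw [Dcap, iSup_congr fun x => Rmono_eq_zero_of_isFreeState (hWfree.2 _ x.2),
      Real.iSup_const_zero]

end Revival

theorem revival_destruction_capacity_faithful_general
    (d : ℕ)
    (H : Matrix (Fin d) (Fin d) ℂ) (hH : H.IsHermitian)
    (T : ℕ)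
    (W : Matrix (Fin d) (Fin d) ℂ) (hW : W ∈ Matrix.unitaryGroup (Fin d) ℂ) :
    0 ≤ Dcap H T W ∧ (Dcap H T W = 0 ↔ IsFreeUnitary H T W) :=
  ⟨Dcap_nonneg hH hW, Dcap_eq_zero_iff hH hW⟩

theorem revival_destruction_capacity_faithful
    (d : ℕ) (hd : 2 ≤ d)
    (H : Matrix (Fin d) (Fin d) ℂ) (hH : H.IsHermitian)
    (ψ : Fin d → Fin d → ℂ) (E : Fin d → ℝ)
    (horth : ∀ i j : Fin d, star (ψ i) ⬝ᵥ ψ j = if i = j then 1 else 0)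
    (heig : ∀ i : Fin d, H *ᵥ ψ i = (E i : ℂ) • ψ i)
    (T : ℕ) (hT : 0 < T)
    (A B : Finset (Fin d))
    (hdisj : Disjoint A B) (hcover : A ∪ B = Finset.univ)
    (hArat : ∀ i ∈ A, ∃ m : ℤ, E i * (T : ℝ) = (m : ℝ))
    (hBirr : ∀ i ∈ B, Irrational (E i))
    (hBdiff : ∀ i ∈ B, ∀ j ∈ B, i ≠ j → Irrational (E i - E j))
    (hAcard : 1 < A.card) (hBcard : 1 < B.card)
    (W : Matrix (Fin d) (Fin d) ℂ) (hW : W ∈ Matrix.unitaryGroup (Fin d) ℂ) :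
    0 ≤ Dcap H T W ∧ (Dcap H T W = 0 ↔ IsFreeUnitary H T W) :=
  revival_destruction_capacity_faithful_general d H hH T W hW
end
end

section
/- For every density matrix ρ on ℂ^d, the mixed-state revival fidelity satisfies F_{R,M}(ρ) = 1 if and only if ⟨ψ_i, ρ ψ_j⟩ = 0 for every pair of distinct indices i, j ∈ I with i ∈ ℬ or j ∈ ℬ; equivalently, ρ = Σ_{i,j∈𝒜} a_{i,j}·ψ_i ψ_j* + Σ_{i∈ℬ} a_{i,i}·ψ_i ψ_i* for some coefficients a_{i,j}. -/
open Matrix Complex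
open scoped ComplexOrder

noncomputable section

open Classical in
/-- Positive semidefinite square root (junk value `0` off the PSD cone). -/
def psdSqrt {d : ℕ} (M : Matrix (Fin d) (Fin d) ℂ) : Matrix (Fin d) (Fin d) ℂ :=
  if h : M.PosSemidef then
    (h.1.eigenvectorUnitary : Matrix (Fin d) (Fin d) ℂ) *
      diagonal ((↑) ∘ (√·) ∘ h.1.eigenvalues) *
      (star h.1.eigenvectorUnitary : Matrix (Fin d) (Fin d) ℂ) else 0

/-- Mixed-state revival fidelity `F_{R,M}(ρ) = tr √(√ρ · U(2πT) ρ U(2πT)* · √ρ)`. -/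
def FRM {d : ℕ} (H : Matrix (Fin d) (Fin d) ℂ) (T : ℕ) (ρ : Matrix (Fin d) (Fin d) ℂ) : ℂ :=
  (psdSqrt (psdSqrt ρ *
    (Uevol H (2 * Real.pi * T) * ρ * (Uevol H (2 * Real.pi * T))ᴴ) * psdSqrt ρ)).trace

/-- A free density matrix: a density matrix with mixed-state revival fidelity one. -/
def IsFreeDM {d : ℕ} (H : Matrix (Fin d) (Fin d) ℂ) (T : ℕ)
    (ρ : Matrix (Fin d) (Fin d) ℂ) : Prop :=
  ρ.PosSemidef ∧ ρ.trace = 1 ∧ FRM H T ρ = 1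

/-!
Put `U = U(2πT)` and `σ = U ρ U*`, again a density matrix.

Fidelity one forces `ρ = σ`. Diagonalise `√(√ρ σ √ρ) = V diag(c) V*`, so that `Σ c` is the
fidelity `F` and `V* √ρ √σ` has Gram matrix `diag(c²)`; a partial isometry `w` with
`V* √ρ √σ w = diag c` then gives the Hilbert–Schmidt identity
`‖√σ w - √ρ V‖² + ‖(1 - w w*) √σ‖² = tr ρ + tr σ - 2F`. At `F = 1` both terms vanish, and
`ρ = (√ρ V)(√ρ V)* = (√σ w)(√σ w)* = σ`.

In the eigenbasis, `⟨ψ_i, σ ψ_j⟩ = e^{2πiT(E_j - E_i)} ⟨ψ_i, ρ ψ_j⟩`, and the phase is `1` exactly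
when `i = j` or `i, j ∈ 𝒜`: otherwise `T(E_j - E_i)` is irrational.
-/

section LinearAlgebra

variable {m n : Type*} [Fintype m] [Fintype n]

theorem Matrix.exists_mul_eq_diagonal_of_mul_conjTranspose [DecidableEq m] {Y : Matrix m n ℂ}
    {c : m → ℝ} (h : Y * Yᴴ = diagonal fun k => (c k : ℂ) ^ 2) :
    ∃ w : Matrix n m ℂ, Y * w = diagonal (fun k => (c k : ℂ)) ∧ w * wᴴ * w = w := by
  -- `0⁻¹ = 0` is what makes `Yᴴ * Dinv` a partial isometry when some `c k` vanish.
  set Dinv : Matrix m m ℂ := diagonal fun k => (c k : ℂ)⁻¹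
  have hDinv : Dinvᴴ = Dinv := by simp [Dinv, diagonal_conjTranspose]
  refine ⟨Yᴴ * Dinv, ?_, ?_⟩
  · rw [← Matrix.mul_assoc, h, diagonal_mul_diagonal]
    congr 1; funext k
    rcases eq_or_ne (c k : ℂ) 0 with hk | hk
    · simp [hk]
    · field_simp
  · have hdiag : Dinv * (Dinv * ((Y * Yᴴ) * Dinv)) = Dinv := by
      simp only [h, Dinv, diagonal_mul_diagonal]
      congr 1; funext k
      rcases eq_or_ne (c k : ℂ) 0 with hk | hk
      · simp [hk]
      · field_simp
    calc Yᴴ * Dinv * (Yᴴ * Dinv)ᴴ * (Yᴴ * Dinv)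
        = Yᴴ * (Dinv * (Dinv * ((Y * Yᴴ) * Dinv))) := by
          simp only [conjTranspose_mul, conjTranspose_conjTranspose, hDinv, Matrix.mul_assoc]
      _ = Yᴴ * Dinv := by rw [hdiag]

variable [DecidableEq n]

theorem Matrix.trace_gram_sub_add_trace_gram_compl {S w a : Matrix n n ℂ} (hS : Sᴴ = S)
    (hw : w * wᴴ * w = w) :
    ((S * w - a)ᴴ * (S * w - a)).trace + (((1 - w * wᴴ) * S)ᴴ * ((1 - w * wᴴ) * S)).trace =
      (S * S).trace + (aᴴ * a).trace - (aᴴ * (S * w)).trace - star (aᴴ * (S * w)).trace := by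
  set R := w * wᴴ
  have hR : (1 - R) * (1 - R) = 1 - R := by
    simp only [sub_mul, mul_sub, one_mul, mul_one, R, ← mul_assoc, hw, sub_self, zero_mul,
      sub_zero]
  have hRH : (1 - R)ᴴ = 1 - R := by simp [R]
  have hww : ((S * w)ᴴ * (S * w)).trace = (S * S * R).trace := by
    rw [conjTranspose_mul, hS, mul_assoc, trace_mul_comm, ← mul_assoc, ← mul_assoc]
  have hRS : (((1 - R) * S)ᴴ * ((1 - R) * S)).trace = (S * S).trace - (S * S * R).trace := by
    rw [conjTranspose_mul, hRH, hS, mul_assoc, ← mul_assoc (1 - R), hR, sub_mul, one_mul,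
      mul_sub, trace_sub, trace_mul_comm S (R * S), mul_assoc, trace_mul_comm R]
  rw [hRS, conjTranspose_sub, sub_mul, mul_sub, mul_sub, trace_sub, trace_sub, trace_sub, hww,
    ← trace_conjTranspose]
  simp only [conjTranspose_mul, conjTranspose_conjTranspose, hS, mul_assoc]
  ring

theorem Matrix.mul_self_eq_of_sum_singularValues_eq_one
    {P S V : Matrix n n ℂ} {c : n → ℝ} (hP : Pᴴ = P) (hS : Sᴴ = S) (hV : V * Vᴴ = 1)
    (hc : Vᴴ * (P * S) * (Vᴴ * (P * S))ᴴ = diagonal fun k => (c k : ℂ) ^ 2)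
    (hc1 : ∑ k, (c k : ℂ) = 1) (hP1 : (P * P).trace = 1) (hS1 : (S * S).trace = 1) :
    P * P = S * S := by
  obtain ⟨w, hw, hww⟩ := exists_mul_eq_diagonal_of_mul_conjTranspose hc
  set a := P * V
  have hab : (aᴴ * (S * w)).trace = 1 := by
    rw [← hc1, ← trace_diagonal, ← hw]; simp only [a, conjTranspose_mul, hP, mul_assoc]
  have haa : (aᴴ * a).trace = 1 := by
    rw [← hP1, conjTranspose_mul, hP, mul_assoc, trace_mul_comm, mul_assoc, mul_assoc, hV,
      mul_one]
  have hsum := trace_gram_sub_add_trace_gram_compl (a := a) hS hww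
  rw [hS1, haa, hab, star_one, show (1 + 1 - 1 - 1 : ℂ) = 0 by ring] at hsum
  obtain ⟨hba, hRS⟩ := (add_eq_zero_iff_of_nonneg
    (posSemidef_conjTranspose_mul_self _).trace_nonneg
    (posSemidef_conjTranspose_mul_self _).trace_nonneg).mp hsum
  have hb : S * w = a := sub_eq_zero.mp (trace_conjTranspose_mul_self_eq_zero_iff.mp hba)
  have hRS' : w * wᴴ * S = S := by
    simpa [sub_mul, sub_eq_zero, eq_comm] using trace_conjTranspose_mul_self_eq_zero_iff.mp hRS
  calc P * P = a * aᴴ := by rw [conjTranspose_mul, hP, mul_assoc, ← mul_assoc V, hV, one_mul]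
    _ = (S * w) * (S * w)ᴴ := by rw [hb]
    _ = S * S := by rw [conjTranspose_mul, hS, mul_assoc, ← mul_assoc w, hRS']

theorem Matrix.ext_iff_of_orthonormal {ψ : n → n → ℂ}
    (horth : ∀ i j, star (ψ i) ⬝ᵥ ψ j = if i = j then 1 else 0) {M N : Matrix n n ℂ} :
    M = N ↔ ∀ i j, star (ψ i) ⬝ᵥ (M *ᵥ ψ j) = star (ψ i) ⬝ᵥ (N *ᵥ ψ j) := by
  set Ψ : Matrix n n ℂ := (of ψ)ᵀ
  have hΨ : Ψᴴ * Ψ = 1 := by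
    ext i j
    simpa [Ψ, mul_apply, one_apply, dotProduct] using horth i j
  have hΨ' : Ψ * Ψᴴ = 1 := mul_eq_one_comm.mp hΨ
  have hentry (X : Matrix n n ℂ) (i j : n) : (Ψᴴ * X * Ψ) i j = star (ψ i) ⬝ᵥ (X *ᵥ ψ j) := by
    simp only [Ψ, mul_apply, dotProduct, mulVec, conjTranspose_apply, transpose_apply, of_apply,
      Pi.star_apply, Finset.mul_sum, Finset.sum_mul, mul_assoc]
    exact Finset.sum_comm
  have hconj (X : Matrix n n ℂ) : Ψ * (Ψᴴ * X * Ψ) * Ψᴴ = X := by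
    simp only [← mul_assoc, hΨ', one_mul]; rw [mul_assoc, hΨ', mul_one]
  refine ⟨fun h _ _ => h ▸ rfl, fun h => ?_⟩
  rw [← hconj M, ← hconj N]
  congr 2
  ext i j
  rw [hentry, hentry, h]

omit [DecidableEq n] in
theorem Matrix.star_dotProduct_conj_mulVec {U ρ : Matrix n n ℂ} {ψ : n → n → ℂ} {μ : n → ℂ}
    (hU : ∀ k, Uᴴ *ᵥ ψ k = μ k • ψ k) (i j : n) :
    star (ψ i) ⬝ᵥ ((U * ρ * Uᴴ) *ᵥ ψ j) = star (μ i) * μ j * (star (ψ i) ⬝ᵥ (ρ *ᵥ ψ j)) := by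
  have hstar : star (ψ i) ᵥ* U = star (μ i • ψ i) := by
    rw [← hU, star_mulVec, conjTranspose_conjTranspose]
  rw [← mulVec_mulVec, hU, ← mulVec_mulVec, dotProduct_mulVec, hstar, mulVec_smul, star_smul,
    smul_dotProduct, dotProduct_smul, smul_eq_mul, smul_eq_mul]
  ring

attribute [local instance] Matrix.linftyOpNormedRing Matrix.linftyOpNormedAlgebra in
theorem Matrix.exp_mulVec_of_mulVec_eq_smul_s8 {M : Matrix n n ℂ} {v : n → ℂ} {c : ℂ}
    (h : M *ᵥ v = c • v) : NormedSpace.exp M *ᵥ v = NormedSpace.exp c • v := by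
  have hpow (k : ℕ) : (M ^ k) *ᵥ v = c ^ k • v := by
    induction k with
    | zero => simp
    | succ k ih => rw [pow_succ', ← mulVec_mulVec, ih, mulVec_smul, h, smul_smul, pow_succ]
  have hM := (NormedSpace.exp_series_hasSum_exp' (𝕂 := ℂ) M).map (mulVec.addMonoidHomLeft v)
    (continuous_id.matrix_mulVec continuous_const)
  have hc := (NormedSpace.exp_series_hasSum_exp' (𝕂 := ℂ) c).smul_const v
  refine hM.unique ?_
  convert hc using 2 with k
  simp [mulVec.addMonoidHomLeft, smul_mulVec, hpow, smul_smul]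

end LinearAlgebra

section Fidelity

open scoped MatrixOrder

variable {d : ℕ} {M : Matrix (Fin d) (Fin d) ℂ}

theorem psdSqrt_eq_sqrt (h : M.PosSemidef) : psdSqrt M = CFC.sqrt M := by
  rw [psdSqrt, dif_pos h, CFC.sqrt_eq_cfc, cfc_nnreal_eq_real _ M h.nonneg, h.1.cfc_eq]
  simp only [IsHermitian.cfc, Unitary.conjStarAlgAut_apply, Real.coe_sqrt, Real.coe_toNNReal']
  congr 3
  funext k
  simp [h.eigenvalues_nonneg k]

theorem conjTranspose_psdSqrt (h : M.PosSemidef) : (psdSqrt M)ᴴ = psdSqrt M := by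
  rw [psdSqrt_eq_sqrt h]; exact (CFC.sqrt_nonneg M).posSemidef.1

theorem psdSqrt_mul_self (h : M.PosSemidef) : psdSqrt M * psdSqrt M = M := by
  rw [psdSqrt_eq_sqrt h]; exact CFC.sqrt_mul_sqrt_self M h.nonneg

theorem psdSqrt_sq (h : M.PosSemidef) : psdSqrt (M ^ 2) = M := by
  rw [psdSqrt_eq_sqrt (h.pow 2)]; exact CFC.sqrt_sq M h.nonneg

theorem exists_unitary_diagonal_sq_of_psdSqrt (h : M.PosSemidef) :
    ∃ (V : Matrix (Fin d) (Fin d) ℂ) (c : Fin d → ℝ), V * Vᴴ = 1 ∧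
      Vᴴ * M * V = diagonal (fun k => (c k : ℂ) ^ 2) ∧ (psdSqrt M).trace = ∑ k, (c k : ℂ) := by
  refine ⟨h.1.eigenvectorUnitary, fun k => √(h.1.eigenvalues k),
    Unitary.coe_mul_star_self _, ?_, ?_⟩
  · have := h.1.conjStarAlgAut_star_eigenvectorUnitary
    rw [Unitary.conjStarAlgAut_apply, Unitary.coe_star, star_star] at this
    rw [← star_eq_conjTranspose, this]
    congr 1; funext k
    simp [← ofReal_pow, Real.sq_sqrt (h.eigenvalues_nonneg k)]
  · rw [psdSqrt, dif_pos h, trace_mul_cycle, Unitary.coe_star_mul_self, one_mul, trace_diagonal]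
    rfl

theorem trace_psdSqrt_eq_one_iff {ρ σ : Matrix (Fin d) (Fin d) ℂ} (hρ : ρ.PosSemidef)
    (hσ : σ.PosSemidef) (hρ1 : ρ.trace = 1) (hσ1 : σ.trace = 1) :
    (psdSqrt (psdSqrt ρ * σ * psdSqrt ρ)).trace = 1 ↔ ρ = σ := by
  set P := psdSqrt ρ
  have hPP : P * P = ρ := psdSqrt_mul_self hρ
  have hP : Pᴴ = P := conjTranspose_psdSqrt hρ
  constructor
  · intro h
    set S := psdSqrt σ
    have hSS : S * S = σ := psdSqrt_mul_self hσ
    have hS : Sᴴ = S := conjTranspose_psdSqrt hσ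
    have hM : (P * σ * P).PosSemidef := by
      simpa only [hP] using hσ.mul_mul_conjTranspose_same P
    obtain ⟨V, c, hV, hVM, htr⟩ := exists_unitary_diagonal_sq_of_psdSqrt hM
    rw [← hPP, ← hSS]
    refine mul_self_eq_of_sum_singularValues_eq_one hP hS hV ?_ (htr ▸ h) (hPP ▸ hρ1)
      (hSS ▸ hσ1)
    rw [← hVM, ← hSS]
    simp only [conjTranspose_mul, conjTranspose_conjTranspose, hP, hS, mul_assoc]
  · rintro rfl
    have : P * ρ * P = ρ ^ 2 := by rw [← hPP]; noncomm_ring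
    rw [this, psdSqrt_sq hρ, hρ1]

end Fidelity

section Evolution

variable {d : ℕ} {H : Matrix (Fin d) (Fin d) ℂ}

theorem Uevol_mulVec {v : Fin d → ℂ} {e : ℝ} (h : H *ᵥ v = (e : ℂ) • v) (t : ℝ) :
    Uevol H t *ᵥ v = cexp (-(I * t * e)) • v := by
  have hv : (-(I * t) • H) *ᵥ v = -(I * t * e) • v := by
    rw [smul_mulVec, h, smul_smul, neg_mul]
  rw [Uevol, Matrix.exp_mulVec_of_mulVec_eq_smul_s8 hv, exp_eq_exp_ℂ]

theorem conjTranspose_Uevol (hH : H.IsHermitian) (t : ℝ) : (Uevol H t)ᴴ = Uevol H (-t) := by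
  rw [Uevol, Uevol, ← Matrix.exp_conjTranspose, conjTranspose_smul, hH.eq]
  congr 2
  simp

theorem conjTranspose_Uevol_mul_self (hH : H.IsHermitian) (t : ℝ) :
    (Uevol H t)ᴴ * Uevol H t = 1 := by
  rw [conjTranspose_Uevol hH, Uevol, Uevol, ← Matrix.exp_add_of_commute _ _
    ((Commute.refl H).smul_left _ |>.smul_right _), ← add_smul]
  simp

theorem star_dotProduct_Uevol_conj_mulVec (hH : H.IsHermitian) {ψ : Fin d → Fin d → ℂ}
    {E : Fin d → ℝ} (heig : ∀ k, H *ᵥ ψ k = (E k : ℂ) • ψ k) (ρ : Matrix (Fin d) (Fin d) ℂ)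
    (t : ℝ) (i j : Fin d) :
    star (ψ i) ⬝ᵥ ((Uevol H t * ρ * (Uevol H t)ᴴ) *ᵥ ψ j) =
      cexp (I * ↑(t * (E j - E i))) * (star (ψ i) ⬝ᵥ (ρ *ᵥ ψ j)) := by
  have hU (k : Fin d) : (Uevol H t)ᴴ *ᵥ ψ k = cexp (I * t * E k) • ψ k := by
    rw [conjTranspose_Uevol hH, Uevol_mulVec (heig k)]
    push_cast; ring_nf
  rw [star_dotProduct_conj_mulVec hU, Complex.star_def, ← exp_conj, ← exp_add]
  push_cast
  congr 2
  simp only [map_mul, conj_I, conj_ofReal]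
  ring

end Evolution

theorem Complex.exp_I_mul_two_pi_mul_eq_one_iff (x : ℝ) :
    cexp (I * ↑(2 * Real.pi * x)) = 1 ↔ ∃ n : ℤ, x = n := by
  rw [Complex.exp_eq_one_iff]
  refine exists_congr fun n => ⟨fun h => ?_, ?_⟩
  · push_cast at h
    have h2pi : (2 * Real.pi * I : ℂ) ≠ 0 := by simp [Real.pi_ne_zero, I_ne_zero]
    have : ((x : ℂ) - n) * (2 * Real.pi * I) = 0 := by linear_combination h
    exact_mod_cast sub_eq_zero.mp ((mul_eq_zero.mp this).resolve_right h2pi)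
  · rintro rfl; push_cast; ring

theorem exists_int_eq_natCast_mul_sub_iff {ι : Type*} [Fintype ι] [DecidableEq ι] {E : ι → ℝ}
    {T : ℕ} {A B : Finset ι} (hT : T ≠ 0) (hcover : A ∪ B = Finset.univ)
    (hArat : ∀ i ∈ A, ∃ m : ℤ, E i * (T : ℝ) = (m : ℝ)) (hBirr : ∀ i ∈ B, Irrational (E i))
    (hBdiff : ∀ i ∈ B, ∀ j ∈ B, i ≠ j → Irrational (E i - E j)) (i j : ι) :
    (∃ n : ℤ, (T : ℝ) * (E j - E i) = n) ↔ i = j ∨ i ∉ B ∧ j ∉ B := by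
  have hcov (k : ι) : k ∈ A ∨ k ∈ B := Finset.mem_union.mp (hcover ▸ Finset.mem_univ k)
  constructor
  · rintro ⟨n, hn⟩
    by_contra! ⟨hne, hB⟩
    have hirr : Irrational ((T : ℝ) * (E j - E i)) := by
      by_cases hi : i ∈ B <;> by_cases hj : j ∈ B
      · exact (hBdiff j hj i hi hne.symm).natCast_mul hT
      · obtain ⟨m, hm⟩ := hArat j ((hcov j).resolve_right hj)
        rw [mul_sub, mul_comm, hm]
        exact ((hBirr i hi).natCast_mul hT).intCast_sub m
      · obtain ⟨m, hm⟩ := hArat i ((hcov i).resolve_right hi)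
        rw [mul_sub, mul_comm _ (E i), hm]
        exact ((hBirr j hj).natCast_mul hT).sub_intCast m
      · exact absurd (hB hi) hj
    exact hirr.ne_int n hn
  · rintro (rfl | ⟨hi, hj⟩)
    · exact ⟨0, by simp⟩
    · obtain ⟨mi, hmi⟩ := hArat i ((hcov i).resolve_right hi)
      obtain ⟨mj, hmj⟩ := hArat j ((hcov j).resolve_right hj)
      exact ⟨mj - mi, by push_cast; linear_combination hmj - hmi⟩

theorem free_density_matrix_characterization_general
    (d : ℕ)
    (H : Matrix (Fin d) (Fin d) ℂ) (hH : H.IsHermitian)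
    (ψ : Fin d → Fin d → ℂ) (E : Fin d → ℝ)
    (horth : ∀ i j : Fin d, star (ψ i) ⬝ᵥ ψ j = if i = j then 1 else 0)
    (heig : ∀ i : Fin d, H *ᵥ ψ i = (E i : ℂ) • ψ i)
    (T : ℕ) (hT : 0 < T)
    (A B : Finset (Fin d))
    (hcover : A ∪ B = Finset.univ)
    (hArat : ∀ i ∈ A, ∃ m : ℤ, E i * (T : ℝ) = (m : ℝ))
    (hBirr : ∀ i ∈ B, Irrational (E i))
    (hBdiff : ∀ i ∈ B, ∀ j ∈ B, i ≠ j → Irrational (E i - E j))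
    (ρ : Matrix (Fin d) (Fin d) ℂ) (hρ : ρ.PosSemidef) (htr : ρ.trace = 1) :
    FRM H T ρ = 1 ↔
      ∀ i j : Fin d, i ≠ j → (i ∈ B ∨ j ∈ B) → star (ψ i) ⬝ᵥ (ρ *ᵥ ψ j) = 0 := by
  set U := Uevol H (2 * Real.pi * T)
  have hσ1 : (U * ρ * Uᴴ).trace = 1 := by
    rw [trace_mul_cycle, conjTranspose_Uevol_mul_self hH, one_mul, htr]
  rw [FRM, trace_psdSqrt_eq_one_iff hρ (hρ.mul_mul_conjTranspose_same U) htr hσ1,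
    ext_iff_of_orthonormal horth]
  refine forall₂_congr fun i j => ?_
  rw [star_dotProduct_Uevol_conj_mulVec hH heig, eq_comm, mul_left_eq_self₀, mul_assoc,
    exp_I_mul_two_pi_mul_eq_one_iff,
    exists_int_eq_natCast_mul_sub_iff hT.ne' hcover hArat hBirr hBdiff]
  tauto

theorem free_density_matrix_characterization
    (d : ℕ) (hd : 2 ≤ d)
    (H : Matrix (Fin d) (Fin d) ℂ) (hH : H.IsHermitian)
    (ψ : Fin d → Fin d → ℂ) (E : Fin d → ℝ)
    (horth : ∀ i j : Fin d, star (ψ i) ⬝ᵥ ψ j = if i = j then 1 else 0)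
    (heig : ∀ i : Fin d, H *ᵥ ψ i = (E i : ℂ) • ψ i)
    (T : ℕ) (hT : 0 < T)
    (A B : Finset (Fin d))
    (hdisj : Disjoint A B) (hcover : A ∪ B = Finset.univ)
    (hArat : ∀ i ∈ A, ∃ m : ℤ, E i * (T : ℝ) = (m : ℝ))
    (hBirr : ∀ i ∈ B, Irrational (E i))
    (hBdiff : ∀ i ∈ B, ∀ j ∈ B, i ≠ j → Irrational (E i - E j))
    (hAcard : 1 < A.card) (hBcard : 1 < B.card)
    (ρ : Matrix (Fin d) (Fin d) ℂ) (hρ : ρ.PosSemidef) (htr : ρ.trace = 1) :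
    FRM H T ρ = 1 ↔
      ∀ i j : Fin d, i ≠ j → (i ∈ B ∨ j ∈ B) → star (ψ i) ⬝ᵥ (ρ *ᵥ ψ j) = 0 :=
  free_density_matrix_characterization_general d H hH ψ E horth heig T hT A B hcover hArat hBirr
    hBdiff ρ hρ htr
end
end

section
/- If a d×d unitary V maps every free observable to a free observable (i.e., V O V* ∈ 𝒪_F for all O ∈ 𝒪_F), then its adjoint V* also maps every free observable to a free observable. -/
open Matrix Complex

noncomputable section

/-- Normalized Hilbert-Schmidt inner product `⟨A,B⟩ = (1/d)·tr(A*B)`. -/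
def hsInner {d : ℕ} (A B : Matrix (Fin d) (Fin d) ℂ) : ℂ := (Aᴴ * B).trace / (d : ℂ)

/-- Heisenberg-evolved observable `O(2πT) = U(2πT)* O U(2πT)`. -/
def Heis {d : ℕ} (H : Matrix (Fin d) (Fin d) ℂ) (T : ℕ)
    (O : Matrix (Fin d) (Fin d) ℂ) : Matrix (Fin d) (Fin d) ℂ :=
  (Uevol H (2 * Real.pi * T))ᴴ * O * Uevol H (2 * Real.pi * T)

/-- Revival correlator `G(O) = |⟨O(2πT), O⟩|²`. -/
def Gcorr {d : ℕ} (H : Matrix (Fin d) (Fin d) ℂ) (T : ℕ)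
    (O : Matrix (Fin d) (Fin d) ℂ) : ℝ :=
  ‖hsInner (Heis H T O) O‖ ^ 2

/-- A free observable: a normalized observable with `G(O) = 1`. -/
def IsFreeObs {d : ℕ} (H : Matrix (Fin d) (Fin d) ℂ) (T : ℕ)
    (O : Matrix (Fin d) (Fin d) ℂ) : Prop :=
  O.IsHermitian ∧ hsInner O O = 1 ∧ Gcorr H T O = 1

/-! Conjugation by a unitary is an isometry for the Frobenius norm, and the free observables form
a compact set: a closed set on the Frobenius sphere of radius `√d`. An isometry mapping a compact
set into itself maps it onto itself, since the orbit of any point returns arbitrarily close to that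
point. Hence every free observable is `V * M * Vᴴ` for some free `M`, and `Vᴴ * (V * M * Vᴴ) * V = M`.
-/

open Set

theorem Isometry.iterate {α : Type*} [PseudoEMetricSpace α] {f : α → α} (hf : Isometry f) :
    ∀ n, Isometry f^[n]
  | 0 => isometry_id
  | n + 1 => (hf.iterate n).comp hf

theorem Isometry.surjOn_of_mapsTo {α : Type*} [EMetricSpace α] {f : α → α} (hf : Isometry f)
    {s : Set α} (hs : IsCompact s) (hmaps : MapsTo f s s) : SurjOn f s s := by
  intro x hx
  rw [← (hs.image hf.continuous).isClosed.closure_eq, EMetric.mem_closure_iff]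
  intro ε hε
  obtain ⟨_, -, φ, hφ, hlim⟩ :=
    hs.tendsto_subseq (x := fun n => f^[n] x) fun n => hmaps.iterate n hx
  obtain ⟨N, hN⟩ := EMetric.cauchySeq_iff'.mp hlim.cauchySeq ε hε
  obtain ⟨k, hk⟩ := Nat.exists_eq_add_of_lt (hφ (Nat.lt_succ_self N))
  -- `f^[φ N]` is an isometry, so `edist (f^[φ (N + 1)] x) (f^[φ N] x) < ε` says that
  -- `f^[k + 1] x` is within `ε` of `x`.
  refine ⟨f^[k + 1] x, ?_, ?_⟩
  · rw [Function.iterate_succ_apply']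
    exact mem_image_of_mem f (hmaps.iterate k hx)
  · have hclose := hN (N + 1) N.le_succ
    rwa [Function.comp_apply, Function.comp_apply, hk, add_assoc, Function.iterate_add_apply,
      (hf.iterate _).edist_eq, edist_comm] at hclose

-- The Frobenius norm induces the product topology on matrices, the one used for continuity below.
attribute [local instance] Matrix.frobeniusNormedAddCommGroup Matrix.frobeniusNormedSpace

theorem Matrix.frobenius_norm_sq_eq_trace {𝕜 m n : Type*} [RCLike 𝕜] [Fintype m] [Fintype n]
    (A : Matrix m n 𝕜) : ((‖A‖ ^ 2 : ℝ) : 𝕜) = (Aᴴ * A).trace := by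
  rw [frobenius_norm_def, ← Real.sqrt_eq_rpow, Real.sq_sqrt (by positivity)]
  simp only [Real.rpow_ofNat, map_sum, map_pow, trace, diag_apply, mul_apply, conjTranspose_apply,
    RCLike.star_def, RCLike.conj_mul]
  exact Finset.sum_comm

theorem Matrix.frobenius_norm_unitary_conj {𝕜 n : Type*} [RCLike 𝕜] [Fintype n] [DecidableEq n]
    {V : Matrix n n 𝕜} (hV : V ∈ unitaryGroup n 𝕜) (A : Matrix n n 𝕜) :
    ‖V * A * Vᴴ‖ = ‖A‖ := by
  have hVV : Vᴴ * V = 1 := mem_unitaryGroup_iff'.mp hV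
  have hconj : (V * A * Vᴴ)ᴴ * (V * A * Vᴴ) = V * (Aᴴ * A) * Vᴴ := by
    simp only [conjTranspose_mul, conjTranspose_conjTranspose, Matrix.mul_assoc]
    rw [← Matrix.mul_assoc Vᴴ V, hVV, Matrix.one_mul]
  have hsq : ((‖V * A * Vᴴ‖ ^ 2 : ℝ) : 𝕜) = ((‖A‖ ^ 2 : ℝ) : 𝕜) := by
    rw [frobenius_norm_sq_eq_trace, frobenius_norm_sq_eq_trace, hconj, trace_mul_comm,
      ← Matrix.mul_assoc, hVV, Matrix.one_mul]
  exact (pow_left_inj₀ (norm_nonneg _) (norm_nonneg _) two_ne_zero).mp (RCLike.ofReal_injective hsq)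

theorem Matrix.isometry_unitary_conj {𝕜 n : Type*} [RCLike 𝕜] [Fintype n] [DecidableEq n]
    {V : Matrix n n 𝕜} (hV : V ∈ unitaryGroup n 𝕜) : Isometry fun A : Matrix n n 𝕜 => V * A * Vᴴ :=
  Isometry.of_dist_eq fun A B => by
    rw [dist_eq_norm, dist_eq_norm, ← Matrix.sub_mul, ← Matrix.mul_sub,
      frobenius_norm_unitary_conj hV]

section FreeObservables

variable {d : ℕ} (H : Matrix (Fin d) (Fin d) ℂ) (T : ℕ)

theorem IsFreeObs.frobenius_norm_sq {H T} {O : Matrix (Fin d) (Fin d) ℂ} (hO : IsFreeObs H T O) :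
    ‖O‖ ^ 2 = d := by
  -- `hsInner O O = 1` rules out `d = 0`, where the division by `d` returns `0`.
  have hd : (d : ℂ) ≠ 0 := by
    rintro hd
    simpa [hsInner, hd] using hO.2.1
  have hnorm := hO.2.1
  rw [hsInner, div_eq_one_iff_eq hd, ← frobenius_norm_sq_eq_trace,
    RCLike.ofReal_eq_complex_ofReal] at hnorm
  exact_mod_cast hnorm

theorem isClosed_setOf_isFreeObs : IsClosed {O : Matrix (Fin d) (Fin d) ℂ | IsFreeObs H T O} := by
  simp only [IsFreeObs, Gcorr, hsInner, Heis, IsHermitian, ofPred_and]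
  refine (isClosed_eq ?_ ?_).inter ((isClosed_eq ?_ ?_).inter (isClosed_eq ?_ ?_)) <;> fun_prop

theorem isCompact_setOf_isFreeObs :
    IsCompact {O : Matrix (Fin d) (Fin d) ℂ | IsFreeObs H T O} := by
  refine Metric.isCompact_of_isClosed_isBounded (isClosed_setOf_isFreeObs H T)
    (isBounded_iff_forall_norm_le.mpr ⟨√d, fun O hO => ?_⟩)
  rw [← Real.sqrt_sq (norm_nonneg O), hO.frobenius_norm_sq]

end FreeObservables

theorem adjoint_preserves_free_observables_general
    (d : ℕ)
    (H : Matrix (Fin d) (Fin d) ℂ)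
    (T : ℕ)
    (V : Matrix (Fin d) (Fin d) ℂ) (hV : V ∈ Matrix.unitaryGroup (Fin d) ℂ)
    (hmap : ∀ O : Matrix (Fin d) (Fin d) ℂ, IsFreeObs H T O → IsFreeObs H T (V * O * Vᴴ)) :
    ∀ O : Matrix (Fin d) (Fin d) ℂ, IsFreeObs H T O → IsFreeObs H T (Vᴴ * O * V) := by
  intro O hO
  obtain ⟨M, hM, rfl⟩ :=
    (isometry_unitary_conj hV).surjOn_of_mapsTo (isCompact_setOf_isFreeObs H T) hmap hO
  have hVV : Vᴴ * V = 1 := mem_unitaryGroup_iff'.mp hV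
  rwa [Matrix.mul_assoc, Matrix.mul_assoc, hVV, Matrix.mul_one, ← Matrix.mul_assoc, hVV,
    Matrix.one_mul]

theorem adjoint_preserves_free_observables
    (d : ℕ) (hd : 2 ≤ d)
    (H : Matrix (Fin d) (Fin d) ℂ) (hH : H.IsHermitian)
    (ψ : Fin d → Fin d → ℂ) (E : Fin d → ℝ)
    (horth : ∀ i j : Fin d, star (ψ i) ⬝ᵥ ψ j = if i = j then 1 else 0)
    (heig : ∀ i : Fin d, H *ᵥ ψ i = (E i : ℂ) • ψ i)
    (T : ℕ) (hT : 0 < T)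
    (A B : Finset (Fin d))
    (hdisj : Disjoint A B) (hcover : A ∪ B = Finset.univ)
    (hArat : ∀ i ∈ A, ∃ m : ℤ, E i * (T : ℝ) = (m : ℝ))
    (hBirr : ∀ i ∈ B, Irrational (E i))
    (hBdiff : ∀ i ∈ B, ∀ j ∈ B, i ≠ j → Irrational (E i - E j))
    (hAcard : 1 < A.card) (hBcard : 1 < B.card)
    (V : Matrix (Fin d) (Fin d) ℂ) (hV : V ∈ Matrix.unitaryGroup (Fin d) ℂ)
    (hmap : ∀ O : Matrix (Fin d) (Fin d) ℂ, IsFreeObs H T O → IsFreeObs H T (V * O * Vᴴ)) :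
    ∀ O : Matrix (Fin d) (Fin d) ℂ, IsFreeObs H T O → IsFreeObs H T (Vᴴ * O * V) :=
  adjoint_preserves_free_observables_general d H T V hV hmap
end
end

section
/- Let d = 2^n, let P and Q be n-qubit Pauli operators, let V be any d×d unitary matrix, and set A = V*PV. Then (1/d)·tr(A·Q·A·Q) is a real number and satisfies (1/d)·tr(A·Q·A·Q) ≥ 2·((1/d)·tr(A·Q))² − 1. -/
open Matrix Complex

noncomputable section

/-- The four 1-qubit Pauli matrices `I₂, σx, σy, σz`. -/
def pauliMat : Fin 4 → Matrix (Fin 2) (Fin 2) ℂ :=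
  ![1, !![0, 1; 1, 0], !![0, -Complex.I; Complex.I, 0], !![1, 0; 0, -1]]

/-- The n-fold Kronecker product `P₁ ⊗ ⋯ ⊗ Pₙ` of 2×2 matrices, as a `2^n × 2^n` matrix. -/
def pauliString {n : ℕ} (P : Fin n → Matrix (Fin 2) (Fin 2) ℂ) :
    Matrix (Fin (2 ^ n)) (Fin (2 ^ n)) ℂ :=
  Matrix.of fun x y =>
    ∏ k : Fin n, P k (finFunctionFinEquiv.symm x k) (finFunctionFinEquiv.symm y k)

/-- An n-qubit Pauli operator: a Kronecker product of 1-qubit Pauli matrices. -/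
def IsPauli {n : ℕ} (O : Matrix (Fin (2 ^ n)) (Fin (2 ^ n)) ℂ) : Prop :=
  ∃ P : Fin n → Matrix (Fin 2) (Fin 2) ℂ,
    (∀ k, ∃ a : Fin 4, P k = pauliMat a) ∧ O = pauliString P

/-!
The operator `M = A Q` is unitary, and `(A Q A Q) = M²`. For any unitary `M`, the Hermitian
matrix `H = M + Mᴴ` has `tr H = 2 Re tr M` and `tr (Hᴴ H) = 2 Re tr M² + 2d`, so Cauchy–Schwarz
on the diagonal of `H`, `(Re tr H)² ≤ d · tr (Hᴴ H)`, is exactly the claimed bound (in eigenvalue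
terms it is `cos 2θ = 2 cos² θ - 1` averaged with Jensen). For Hermitian `A` and `Q` the conjugate
of `tr (A Q A Q)` is `tr (Q A Q A)`, which is the same trace by cyclicity.
-/

theorem pauliMat_isHermitian (a : Fin 4) : (pauliMat a).IsHermitian := by
  fin_cases a <;>
  · ext i j
    fin_cases i <;> fin_cases j <;> simp [pauliMat]

theorem pauliMat_mul_self (a : Fin 4) : pauliMat a * pauliMat a = 1 := by
  fin_cases a <;>
  · ext i j
    fin_cases i <;> fin_cases j <;> simp [pauliMat, mul_apply, Fin.sum_univ_two, one_apply]

section pauliString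

variable {n : ℕ}

theorem pauliString_conjTranspose (P : Fin n → Matrix (Fin 2) (Fin 2) ℂ) :
    (pauliString P)ᴴ = pauliString fun k => (P k)ᴴ := by
  ext x y
  simp [pauliString, conjTranspose_apply, star_prod]

theorem pauliString_mul (P Q : Fin n → Matrix (Fin 2) (Fin 2) ℂ) :
    pauliString P * pauliString Q = pauliString fun k => P k * Q k := by
  ext x y
  simp only [mul_apply, pauliString, of_apply, Fintype.prod_sum]
  rw [← finFunctionFinEquiv.sum_comp]
  simp [Finset.prod_mul_distrib]

theorem pauliString_one : pauliString (fun _ : Fin n => (1 : Matrix (Fin 2) (Fin 2) ℂ)) = 1 := by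
  ext x y
  simp only [pauliString, of_apply, one_apply, Finset.prod_boole, Finset.mem_univ, true_implies]
  exact if_congr (funext_iff.symm.trans finFunctionFinEquiv.symm.injective.eq_iff) rfl rfl

theorem IsPauli.isHermitian {O : Matrix (Fin (2 ^ n)) (Fin (2 ^ n)) ℂ} (h : IsPauli O) :
    O.IsHermitian := by
  obtain ⟨P, hP, rfl⟩ := h
  rw [IsHermitian, pauliString_conjTranspose]
  congr with k : 1
  obtain ⟨a, ha⟩ := hP k
  exact ha ▸ pauliMat_isHermitian a

theorem IsPauli.mul_self {O : Matrix (Fin (2 ^ n)) (Fin (2 ^ n)) ℂ} (h : IsPauli O) :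
    O * O = 1 := by
  obtain ⟨P, hP, rfl⟩ := h
  rw [pauliString_mul, ← pauliString_one]
  congr with k : 1
  obtain ⟨a, ha⟩ := hP k
  exact ha ▸ pauliMat_mul_self a

theorem IsPauli.mem_unitaryGroup {O : Matrix (Fin (2 ^ n)) (Fin (2 ^ n)) ℂ} (h : IsPauli O) :
    O ∈ unitaryGroup (Fin (2 ^ n)) ℂ := by
  rw [mem_unitaryGroup_iff, star_eq_conjTranspose, h.isHermitian.eq, h.mul_self]

end pauliString

namespace Matrix

variable {ι : Type*} [Fintype ι]

theorem sq_re_le_re_conjTranspose_mul_self_apply (H : Matrix ι ι ℂ) (i : ι) :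
    (H i i).re ^ 2 ≤ ((Hᴴ * H) i i).re := by
  have hdiag : ((Hᴴ * H) i i).re = ∑ j, normSq (H j i) := by
    simp [mul_apply, re_sum, normSq_apply]
  calc (H i i).re ^ 2 ≤ normSq (H i i) := by
        rw [normSq_apply]; nlinarith [mul_self_nonneg (H i i).im]
    _ ≤ ∑ j, normSq (H j i) :=
        Finset.single_le_sum (fun j _ => normSq_nonneg (H j i)) (Finset.mem_univ i)
    _ = _ := hdiag.symm

theorem sq_re_trace_le_card_mul_re_trace_conjTranspose_mul_self (H : Matrix ι ι ℂ) :
    H.trace.re ^ 2 ≤ Fintype.card ι * (Hᴴ * H).trace.re := by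
  simp only [trace, diag, re_sum]
  calc (∑ i, (H i i).re) ^ 2 ≤ Fintype.card ι * ∑ i, (H i i).re ^ 2 :=
        sq_sum_le_card_mul_sum_sq
    _ ≤ Fintype.card ι * ∑ i, ((Hᴴ * H) i i).re := by
        gcongr with i
        exact sq_re_le_re_conjTranspose_mul_self_apply H i

theorem IsHermitian.im_trace_mul_mul_mul_eq_zero {A B : Matrix ι ι ℂ} (hA : A.IsHermitian)
    (hB : B.IsHermitian) : (A * B * A * B).trace.im = 0 := by
  rw [← conj_eq_iff_im, ← star_def, ← trace_conjTranspose]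
  simp only [conjTranspose_mul, hA.eq, hB.eq, ← mul_assoc]
  simpa only [← mul_assoc] using trace_mul_comm B (A * B * A)

variable [DecidableEq ι]

theorem two_mul_sq_re_trace_le_of_mem_unitaryGroup {M : Matrix ι ι ℂ}
    (hM : M ∈ unitaryGroup ι ℂ) :
    2 * M.trace.re ^ 2 ≤ Fintype.card ι * ((M * M).trace.re + Fintype.card ι) := by
  have hMMs : M * Mᴴ = 1 := mem_unitaryGroup_iff.mp hM
  have hMsM : Mᴴ * M = 1 := mem_unitaryGroup_iff'.mp hM
  set H := M + Mᴴ
  have htrace : H.trace.re = 2 * M.trace.re := by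
    simp only [H, trace_add, trace_conjTranspose, add_re, star_def, conj_re]; ring
  have hsq : Hᴴ * H = M * M + (M * M)ᴴ + 1 + 1 := by
    simp only [H, conjTranspose_add, conjTranspose_conjTranspose, conjTranspose_mul, add_mul,
      mul_add, hMMs, hMsM]
    abel
  have hsq_trace : (Hᴴ * H).trace.re = 2 * (M * M).trace.re + 2 * Fintype.card ι := by
    simp only [hsq, trace_add, trace_conjTranspose, trace_one, add_re, star_def, conj_re,
      natCast_re]
    ring
  have hCS := sq_re_trace_le_card_mul_re_trace_conjTranspose_mul_self H
  rw [htrace, hsq_trace] at hCS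
  linarith

theorem two_mul_sq_re_trace_div_card_sub_one_le_of_mem_unitaryGroup {M : Matrix ι ι ℂ}
    (hM : M ∈ unitaryGroup ι ℂ) :
    2 * (M.trace.re / Fintype.card ι) ^ 2 - 1 ≤ (M * M).trace.re / Fintype.card ι := by
  rcases (Nat.cast_nonneg (α := ℝ) (Fintype.card ι)).eq_or_lt with hd | hd
  · simp [← hd]
  have key := two_mul_sq_re_trace_le_of_mem_unitaryGroup hM
  rw [div_pow, le_div_iff₀ hd]
  field_simp
  linarith

end Matrix

theorem evolved_pauli_otoc_lower_bound_general
    (n : ℕ)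
    (P Q : Matrix (Fin (2 ^ n)) (Fin (2 ^ n)) ℂ) (hP : IsPauli P) (hQ : IsPauli Q)
    (V : Matrix (Fin (2 ^ n)) (Fin (2 ^ n)) ℂ)
    (hV : V ∈ Matrix.unitaryGroup (Fin (2 ^ n)) ℂ)
    (A : Matrix (Fin (2 ^ n)) (Fin (2 ^ n)) ℂ) (hA : A = Vᴴ * P * V) :
    ((A * Q * A * Q).trace / ((2 ^ n : ℕ) : ℂ)).im = 0 ∧
    2 * (((A * Q).trace / ((2 ^ n : ℕ) : ℂ)).re) ^ 2 - 1 ≤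
      ((A * Q * A * Q).trace / ((2 ^ n : ℕ) : ℂ)).re := by
  have hA_herm : A.IsHermitian := hA ▸ isHermitian_conjTranspose_mul_mul V hP.isHermitian
  have hA_unitary : A ∈ unitaryGroup (Fin (2 ^ n)) ℂ :=
    hA ▸ mul_mem (mul_mem (Unitary.star_mem hV) hP.mem_unitaryGroup) hV
  have hAQ_unitary := mul_mem hA_unitary hQ.mem_unitaryGroup
  rw [div_natCast_im, div_natCast_re, div_natCast_re]
  refine ⟨by rw [hA_herm.im_trace_mul_mul_mul_eq_zero hQ.isHermitian, zero_div], ?_⟩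
  simpa only [Fintype.card_fin, Nat.cast_pow, Nat.cast_ofNat, ← mul_assoc] using
    two_mul_sq_re_trace_div_card_sub_one_le_of_mem_unitaryGroup hAQ_unitary

theorem evolved_pauli_otoc_lower_bound
    (n : ℕ) (hn : 1 ≤ n)
    (P Q : Matrix (Fin (2 ^ n)) (Fin (2 ^ n)) ℂ) (hP : IsPauli P) (hQ : IsPauli Q)
    (V : Matrix (Fin (2 ^ n)) (Fin (2 ^ n)) ℂ)
    (hV : V ∈ Matrix.unitaryGroup (Fin (2 ^ n)) ℂ)
    (A : Matrix (Fin (2 ^ n)) (Fin (2 ^ n)) ℂ) (hA : A = Vᴴ * P * V) :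
    ((A * Q * A * Q).trace / ((2 ^ n : ℕ) : ℂ)).im = 0 ∧
    2 * (((A * Q).trace / ((2 ^ n : ℕ) : ℂ)).re) ^ 2 - 1 ≤
      ((A * Q * A * Q).trace / ((2 ^ n : ℕ) : ℂ)).re :=
  evolved_pauli_otoc_lower_bound_general n P Q hP hQ V hV A hA
end
end

section
/- For every α ∈ ℝ, every d ≥ 1, and every d×d complex matrix ρ, with p = sin²(α) one has 𝒩(R_α · (ρ ⊗ f₀f₀*) · R_α*) = (1−p)·(ρ ⊗ f₀f₀*) + p·Σ_{j=1}^{d} (e_j e_j* · ρ · e_j e_j*) ⊗ (f_j f_j*). That is, the weak measurement channel of strength p acts as 𝓜_p(ρ) = (1−p)·ρ ⊗ |0⟩⟨0|_E + p·Σ_j |j⟩⟨j|ρ|j⟩⟨j| ⊗ |j⟩⟨j|_E. -/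
open Matrix Complex Kronecker

noncomputable section

/-- `X_j = f_j f_0* + f_0 f_j*` on `ℂ^{d+1}`, for `1 ≤ j ≤ d`. -/
def Xop (d : ℕ) (j : Fin d) : Matrix (Fin (d + 1)) (Fin (d + 1)) ℂ :=
  Matrix.single j.succ 0 1 + Matrix.single 0 j.succ 1

/-- Controlled rotation `R_α = Σ_j (e_j e_j*) ⊗ exp(-i α X_j)`. -/
def Rrot (d : ℕ) (α : ℝ) : Matrix (Fin d × Fin (d + 1)) (Fin d × Fin (d + 1)) ℂ :=
  ∑ j : Fin d,
    Matrix.single j j (1 : ℂ) ⊗ₖ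
      NormedSpace.exp ((-(Complex.I * (α : ℂ))) • Xop d j)

/-- Dephasing channel `𝒩(M) = Σ_i (I ⊗ f_i f_i*) M (I ⊗ f_i f_i*)`. -/
def dephase (d : ℕ) (M : Matrix (Fin d × Fin (d + 1)) (Fin d × Fin (d + 1)) ℂ) :
    Matrix (Fin d × Fin (d + 1)) (Fin d × Fin (d + 1)) ℂ :=
  ∑ i : Fin (d + 1),
    ((1 : Matrix (Fin d) (Fin d) ℂ) ⊗ₖ Matrix.single i i (1 : ℂ)) * M *
      ((1 : Matrix (Fin d) (Fin d) ℂ) ⊗ₖ Matrix.single i i (1 : ℂ))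

/-!
Since `X_j ^ 3 = X_j`, we have `X_j = P - Q` for the orthogonal idempotents
`P, Q = (X_j ^ 2 ± X_j) / 2`, so the exponential series collapses to
`exp (-iα X_j) = 1 - i sin α • X_j + (cos α - 1) • X_j ^ 2`, so the rotation sends `f₀` to
`u_j = cos α • f₀ - i sin α • f_j`. Hence `R_α (ρ ⊗ f₀f₀*) R_α*` is the block matrix
`Σ_{j,k} e_je_j* ρ e_ke_k* ⊗ u_ju_k*`, and dephasing replaces each `u_ju_k*` by its diagonal
`cos² α • f₀f₀* + δ_{jk} sin² α • f_jf_j*`; summing the first part over `j, k` gives back `ρ`.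
-/

namespace NormedSpace

variable {𝔸 : Type*} [NormedRing 𝔸] [NormedAlgebra ℂ 𝔸] [CompleteSpace 𝔸]

theorem exp_smul_add_smul_of_orthogonal_idempotents {p q : 𝔸} (hp : IsIdempotentElem p)
    (hq : IsIdempotentElem q) (hpq : p * q = 0) (hqp : q * p = 0) (a b : ℂ) :
    exp (a • p + b • q) = 1 + (Complex.exp a - 1) • p + (Complex.exp b - 1) • q := by
  have hpow (n : ℕ) : (a • p + b • q) ^ (n + 1) = a ^ (n + 1) • p + b ^ (n + 1) • q := by
    induction n with
    | zero => simp
    | succ n ih =>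
      rw [pow_succ, ih]
      simp only [add_mul, mul_add, smul_mul_smul, hp.eq, hq.eq, hpq, hqp, smul_zero,
        add_zero, zero_add, ← pow_succ]
  have hseries (z : ℂ) (r : 𝔸) :
      HasSum (fun n : ℕ => ((n.factorial : ℂ)⁻¹ * z ^ n) • r) (Complex.exp z • r) := by
    rw [Complex.exp_eq_exp_ℂ]
    simpa only [smul_eq_mul] using (exp_series_hasSum_exp' (𝕂 := ℂ) z).smul_const r
  refine (exp_series_hasSum_exp' (𝕂 := ℂ) (a • p + b • q)).unique ?_
  convert ((hseries a p).add (hseries b q)).add (hasSum_ite_eq 0 (1 - p - q)) using 1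
  · funext n
    cases n with
    | zero => simp
    | succ n => simp [hpow, smul_smul]
  · simp only [sub_smul, one_smul]
    abel

theorem exp_smul_of_pow_three_eq_self {x : 𝔸} (hx : x ^ 3 = x) (c : ℂ) :
    exp (c • x) = 1 + Complex.sinh c • x + (Complex.cosh c - 1) • x ^ 2 := by
  have h22 : x ^ 2 * x ^ 2 = x ^ 2 := by rw [← pow_add, pow_succ, hx, ← sq]
  have h21 : x ^ 2 * x = x := by rw [← pow_succ, hx]
  have h12 : x * x ^ 2 = x := by rw [← pow_succ', hx]
  have h11 : x * x = x ^ 2 := (sq x).symm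
  set p : 𝔸 := (2⁻¹ : ℂ) • (x ^ 2 + x)
  set q : 𝔸 := (2⁻¹ : ℂ) • (x ^ 2 - x)
  have hp : IsIdempotentElem p := by
    simp only [IsIdempotentElem, p, smul_mul_smul, add_mul, mul_add, h22, h21, h12, h11]
    module
  have hq : IsIdempotentElem q := by
    simp only [IsIdempotentElem, q, smul_mul_smul, sub_mul, mul_sub, h22, h21, h12, h11]
    module
  have hpq : p * q = 0 := by
    simp only [p, q, smul_mul_smul, add_mul, mul_sub, h22, h21, h12, h11]
    module
  have hqp : q * p = 0 := by
    simp only [p, q, smul_mul_smul, sub_mul, mul_add, h22, h21, h12, h11]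
    module
  have hx_eq : c • x = c • p + (-c) • q := by
    simp only [p, q, smul_smul]
    module
  rw [hx_eq, exp_smul_add_smul_of_orthogonal_idempotents hp hq hpq hqp]
  simp only [p, q, Complex.cosh, Complex.sinh]
  module

end NormedSpace

namespace Matrix

theorem exp_smul_of_pow_three_eq_self {n : Type*} [Fintype n] [DecidableEq n]
    {X : Matrix n n ℂ} (hX : X ^ 3 = X) (c : ℂ) :
    NormedSpace.exp (c • X) = 1 + Complex.sinh c • X + (Complex.cosh c - 1) • X ^ 2 := by
  let _ : NormedRing (Matrix n n ℂ) := Matrix.linftyOpNormedRing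
  let _ : NormedAlgebra ℂ (Matrix n n ℂ) := Matrix.linftyOpNormedAlgebra
  exact NormedSpace.exp_smul_of_pow_three_eq_self hX c

section Kronecker

variable {R ι l m n p : Type*}

theorem sum_kronecker [NonUnitalNonAssocSemiring R] [Fintype ι] (A : ι → Matrix l m R)
    (B : Matrix n p R) : (∑ i, A i) ⊗ₖ B = ∑ i, A i ⊗ₖ B := by
  ext ⟨a, b⟩ ⟨a', b'⟩
  simp [kroneckerMap_apply, sum_apply, Finset.sum_mul]

theorem kronecker_sum [NonUnitalNonAssocSemiring R] [Fintype ι] (A : Matrix l m R)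
    (B : ι → Matrix n p R) : A ⊗ₖ (∑ i, B i) = ∑ i, A ⊗ₖ B i := by
  ext ⟨a, b⟩ ⟨a', b'⟩
  simp [kroneckerMap_apply, sum_apply, Finset.mul_sum]

variable [CommSemiring R] [StarRing R]

theorem sum_single_kronecker_mul_kronecker_mul_conjTranspose [Fintype m] [DecidableEq m]
    [Fintype n] (U : m → Matrix n n R) (ρ : Matrix m m R) (B : Matrix n n R) :
    (∑ j, single j j 1 ⊗ₖ U j) * (ρ ⊗ₖ B) * (∑ k, single k k 1 ⊗ₖ U k)ᴴ =
      ∑ j, ∑ k, (single j j 1 * ρ * single k k 1) ⊗ₖ (U j * B * (U k)ᴴ) := by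
  simp only [conjTranspose_sum, conjTranspose_kronecker, conjTranspose_single, star_one,
    Finset.sum_mul, Finset.mul_sum, ← mul_kronecker_mul]
  exact Finset.sum_comm

theorem mul_single_mul_conjTranspose_apply [Fintype n] [DecidableEq n] (M N : Matrix n n R)
    (a i i' : n) : (M * single a a 1 * Nᴴ : Matrix n n R) i i' = M i a * star (N i' a) := by
  simp [mul_apply, single_apply, ite_and, Finset.sum_ite_eq]

end Kronecker

end Matrix

section Dephasing

variable {d : ℕ}

theorem dephase_sum {ι : Type*} [Fintype ι]
    (M : ι → Matrix (Fin d × Fin (d + 1)) (Fin d × Fin (d + 1)) ℂ) :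
    dephase d (∑ i, M i) = ∑ i, dephase d (M i) := by
  simp only [dephase, Finset.mul_sum, Finset.sum_mul]
  exact Finset.sum_comm

theorem dephase_kronecker (A : Matrix (Fin d) (Fin d) ℂ)
    (B : Matrix (Fin (d + 1)) (Fin (d + 1)) ℂ) :
    dephase d (A ⊗ₖ B) = A ⊗ₖ diagonal B.diag := by
  simp only [dephase, ← mul_kronecker_mul, one_mul, mul_one, single_mul_mul_single,
    ← kronecker_sum, sum_single_eq_diagonal]
  rfl

end Dephasing

section Rotation

variable {d : ℕ} (j : Fin d)

theorem Xop_sq : Xop d j ^ 2 = single 0 0 1 + single j.succ j.succ 1 := by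
  simp [sq, Xop, add_mul, mul_add, Fin.succ_ne_zero, (Fin.succ_ne_zero j).symm, add_comm]

theorem Xop_pow_three : Xop d j ^ 3 = Xop d j := by
  rw [pow_succ, Xop_sq]
  simp [Xop, add_mul, mul_add, Fin.succ_ne_zero, (Fin.succ_ne_zero j).symm, add_comm]

theorem exp_Xop_apply_zero (α : ℝ) (i : Fin (d + 1)) :
    NormedSpace.exp ((-(I * (α : ℂ))) • Xop d j) i 0 =
      if i = 0 then (Real.cos α : ℂ) else if i = j.succ then -(I * Real.sin α) else 0 := by
  have hsinh : Complex.sinh (-(I * α)) = -(I * Real.sin α) := by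
    rw [neg_mul_eq_mul_neg, mul_comm, Complex.sinh_mul_I]
    simp [mul_comm]
  have hcosh : Complex.cosh (-(I * α)) = Real.cos α := by
    rw [neg_mul_eq_mul_neg, mul_comm, Complex.cosh_mul_I]
    simp
  rw [Matrix.exp_smul_of_pow_three_eq_self (Xop_pow_three j), Xop_sq, hsinh, hcosh]
  rcases eq_or_ne i 0 with rfl | hi
  · simp [Xop, Fin.succ_ne_zero]
  · rcases eq_or_ne i j.succ with rfl | hij
    · simp [Xop, hi.symm]
    · simp [Xop, hi, hij, hi.symm, hij.symm]

theorem diagonal_diag_exp_Xop_mul_single_mul_conjTranspose (α : ℝ) (k : Fin d) :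
    diagonal (NormedSpace.exp ((-(I * (α : ℂ))) • Xop d j) * single 0 0 1 *
        (NormedSpace.exp ((-(I * (α : ℂ))) • Xop d k))ᴴ).diag =
      ((Real.cos α ^ 2 : ℝ) : ℂ) • single 0 0 1 +
        (if j = k then ((Real.sin α ^ 2 : ℝ) : ℂ) else 0) • single j.succ k.succ 1 := by
  have hcos : (Real.cos α : ℂ) * star (Real.cos α : ℂ) = ((Real.cos α ^ 2 : ℝ) : ℂ) := by
    rw [Complex.star_def, Complex.conj_ofReal, Complex.ofReal_pow, sq]
  have hsin : -(I * Real.sin α) * star (-(I * Real.sin α)) = ((Real.sin α ^ 2 : ℝ) : ℂ) := by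
    rw [star_neg, star_mul', Complex.star_def, Complex.conj_ofReal, Complex.conj_I,
      Complex.ofReal_pow]
    linear_combination (-(Real.sin α : ℂ) ^ 2) * Complex.I_sq
  ext a b
  simp only [Matrix.add_apply, Matrix.smul_apply, smul_eq_mul]
  rcases eq_or_ne a b with rfl | hab
  · rw [diagonal_apply_eq, diag_apply, mul_single_mul_conjTranspose_apply, exp_Xop_apply_zero,
      exp_Xop_apply_zero]
    induction a using Fin.cases with
    | zero =>
      simp only [↓reduceIte, hcos, single_apply_same, single_apply_of_row_ne (Fin.succ_ne_zero j),
        mul_one, mul_zero, add_zero]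
    | succ m =>
      simp only [Fin.succ_ne_zero, ↓reduceIte, Fin.succ_inj,
        single_apply_of_row_ne (Fin.succ_ne_zero m).symm, mul_zero, zero_add]
      by_cases hmj : m = j <;> by_cases hmk : m = k
      · subst hmj hmk
        simp only [↓reduceIte, hsin, single_apply_same, mul_one]
      · subst hmj
        simp [hmk]
      · subst hmk
        simp [hmj, Ne.symm hmj]
      · simp [hmj, hmk, single_apply_of_row_ne (Fin.succ_injective _ |>.ne (Ne.symm hmj))]
  · have hoff (i : Fin (d + 1)) (z : ℂ) : single i i z a b = 0 := by
      rw [single_apply, if_neg fun h => hab (h.1.symm.trans h.2)]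
    rcases eq_or_ne j k with rfl | hjk
    · simp only [diagonal_apply_ne _ hab, hoff, mul_zero, add_zero]
    · simp only [diagonal_apply_ne _ hab, hoff, hjk, ↓reduceIte, mul_zero, zero_mul, add_zero]

end Rotation

theorem weak_measurement_channel_form_general
    (d : ℕ) (α : ℝ) (ρ : Matrix (Fin d) (Fin d) ℂ) :
    dephase d (Rrot d α *
        (ρ ⊗ₖ Matrix.single (0 : Fin (d + 1)) (0 : Fin (d + 1)) (1 : ℂ)) *
        (Rrot d α)ᴴ) =
      ((1 - Real.sin α ^ 2 : ℝ) : ℂ) •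
          (ρ ⊗ₖ Matrix.single (0 : Fin (d + 1)) (0 : Fin (d + 1)) (1 : ℂ)) +
        ((Real.sin α ^ 2 : ℝ) : ℂ) •
          ∑ j : Fin d,
            (Matrix.single j j (1 : ℂ) * ρ * Matrix.single j j (1 : ℂ)) ⊗ₖ
              Matrix.single j.succ j.succ (1 : ℂ) := by
  have hρ : ∑ j : Fin d, ∑ k : Fin d, single j j (1 : ℂ) * ρ * single k k 1 = ρ := by
    simp only [← Finset.mul_sum, ← Finset.sum_mul, sum_single_one, one_mul, mul_one]
  rw [Rrot, sum_single_kronecker_mul_kronecker_mul_conjTranspose]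
  simp only [dephase_sum, dephase_kronecker, diagonal_diag_exp_Xop_mul_single_mul_conjTranspose,
    kronecker_add, kronecker_smul, Finset.sum_add_distrib]
  simp only [ite_smul, zero_smul, Finset.sum_ite_eq, Finset.mem_univ, if_true, ← Finset.smul_sum,
    ← sum_kronecker, hρ, Real.cos_sq']

theorem weak_measurement_channel_form
    (d : ℕ) (hd : 1 ≤ d) (α : ℝ) (ρ : Matrix (Fin d) (Fin d) ℂ) :
    dephase d (Rrot d α *
        (ρ ⊗ₖ Matrix.single (0 : Fin (d + 1)) (0 : Fin (d + 1)) (1 : ℂ)) *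
        (Rrot d α)ᴴ) =
      ((1 - Real.sin α ^ 2 : ℝ) : ℂ) •
          (ρ ⊗ₖ Matrix.single (0 : Fin (d + 1)) (0 : Fin (d + 1)) (1 : ℂ)) +
        ((Real.sin α ^ 2 : ℝ) : ℂ) •
          ∑ j : Fin d,
            (Matrix.single j j (1 : ℂ) * ρ * Matrix.single j j (1 : ℂ)) ⊗ₖ
              Matrix.single j.succ j.succ (1 : ℂ) :=
  weak_measurement_channel_form_general d α ρ
end
end
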